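/- arXiv:1101.5518 — 2 statements merged into one kernel-verified Lean document; each statement's English description precedes it below -/
import Mathlib

section
/- Let T be a tree with colouring ω, let S₀ be any sequence of moves flooding T, and let U be a set of leaves of T such that playing the subsequence S₀′ of S₀ consisting of moves that change the colour of some non-leaf vertex makes T \ U monochromatic. Then T can be flooded by a sequence of length at most |S₀′| + |col(U, ω)|, where col(U, ω) is the set of colours assigned by ω to vertices of U. -/
noncomputable section

variable {V C : Type*}

/-- The monochromatic component of `v`: vertices reachable from `v` through
vertices of the same colour. -/
def monoComp (G : SimpleGraph V) (ω : V → C) (v : V) : Set V :=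
  {u | Relation.ReflTransGen (fun a b => G.Adj a b ∧ ω a = ω b) v u}

open Classical in
/-- Playing the single flood move `mv = (v, d)`: the monochromatic component of
`v` receives colour `d`. -/
def floodMove (G : SimpleGraph V) (ω : V → C) (mv : V × C) : V → C :=
  fun u => if u ∈ monoComp G ω mv.1 then mv.2 else ω u

/-- Playing a sequence of flood moves. -/
def play (G : SimpleGraph V) : (V → C) → List (V × C) → (V → C)
  | ω, [] => ω
  | ω, mv :: S => play G (floodMove G ω mv) S

/-- A sequence `S` floods `G` with colour `d` if after playing it every vertex
has colour `d`. -/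
def Floods (G : SimpleGraph V) (ω : V → C) (S : List (V × C)) (d : C) : Prop :=
  ∀ u, play G ω S u = d

/-- `m(G, ω, d)`: the minimum number of moves needed to make `G`
monochromatic in colour `d`. -/
def floodNum (G : SimpleGraph V) (ω : V → C) (d : C) : ℕ :=
  sInf {k | ∃ S : List (V × C), S.length = k ∧ Floods G ω S d}

/-- `m(G, ω)`: the minimum number of moves needed to make `G` monochromatic. -/
def floodNumMin (G : SimpleGraph V) (ω : V → C) : ℕ :=
  sInf {k | ∃ (S : List (V × C)) (d : C), S.length = k ∧ Floods G ω S d}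

open Classical in
/-- The subsequence of moves of `S` played in the vertex set `A`, viewed as
moves of the induced subgraph on `A`. -/
def restrictMoves (A : Set V) (S : List (V × C)) : List (↥A × C) :=
  S.filterMap (fun mv => if h : mv.1 ∈ A then some (⟨mv.1, h⟩, mv.2) else none)

/-- Moves of an induced subgraph on `A`, viewed as moves of the ambient graph. -/
def liftMoves (A : Set V) (S : List (↥A × C)) : List (V × C) :=
  S.map (fun mv => ((mv.1 : V), mv.2))

end

/-!
A move that recolours a non-leaf vertex and reaches a leaf `u` also reaches the neighbour `w` of
`u`; hence along `S₀'` every leaf keeps its original colour or shares that of its neighbour. After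
`S₀'` the vertices outside `U` form one monochromatic component `K` (inner vertices of a path are
not leaves), and every leaf outside `K` is adjacent to `K` and still has its colour under `ω`.
Playing a vertex of `K` successively with every colour of `col(U, ω)` then absorbs all of them.
-/

namespace SimpleGraph

variable {V C : Type*} {G : SimpleGraph V}

theorem eq_or_eq_of_unique_adj (hG : G.Connected) {u w : V} (hu : ∀ x, G.Adj u x → x = w)
    (hw : ∀ x, G.Adj w x → x = u) (x : V) : x = u ∨ x = w := by
  obtain ⟨p⟩ := hG.preconnected u x
  suffices ∀ {a b : V} (_ : G.Walk a b), a = u ∨ a = w → b = u ∨ b = w from this p (.inl rfl)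
  intro a b p
  induction p with
  | nil => exact id
  | cons h _ ih =>
    rintro (rfl | rfl)
    · exact ih (.inr (hu _ h))
    · exact ih (.inl (hw _ h))

theorem Walk.IsPath.notMem_of_mem_support {U : Set V} (hU : ∀ u ∈ U, ∃! w, G.Adj u w)
    {a b : V} {p : G.Walk a b} (hp : p.IsPath) (ha : a ∉ U) (hb : b ∉ U) :
    ∀ x ∈ p.support, x ∉ U := by
  induction p with
  | nil => simpa using ha
  | @cons a x b h q ih =>
    rw [Walk.cons_isPath_iff] at hp
    have hx : x ∉ U := by
      cases q with
      | nil => exact hb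
      | @cons _ y _ h' q' =>
        -- `x` has the two distinct neighbours `a` and `y` on the path
        intro hxU
        obtain ⟨z, -, hz⟩ := hU x hxU
        have hay : a = y := (hz a h.symm).trans (hz y h').symm
        exact hp.2 (by simp [hay])
    simpa [ha] using ih hp.1 hx hb

end SimpleGraph

open SimpleGraph

section FloodIt

variable {V C : Type*} (G : SimpleGraph V)

theorem play_append (ω : V → C) (S S' : List (V × C)) :
    play G ω (S ++ S') = play G (play G ω S) S' := by
  induction S generalizing ω with
  | nil => rfl
  | cons mv S ih => exact ih _

theorem play_take_succ (ω : V → C) (S : List (V × C)) {i : ℕ} (hi : i < S.length) :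
    play G ω (S.take (i + 1)) = floodMove G (play G ω (S.take i)) S[i] := by
  rw [List.take_add_one, List.getElem?_eq_getElem hi, play_append]
  rfl

variable {G}

theorem apply_eq_of_mem_monoComp {ψ : V → C} {v x : V} (hx : x ∈ monoComp G ψ v) :
    ψ x = ψ v := by
  induction hx with
  | refl => rfl
  | tail _ h ih => exact h.2 ▸ ih

theorem mem_monoComp_of_adj {ψ : V → C} {v x y : V} (hy : y ∈ monoComp G ψ v)
    (hxy : G.Adj y x) (hψ : ψ y = ψ x) : x ∈ monoComp G ψ v :=
  Relation.ReflTransGen.tail hy ⟨hxy, hψ⟩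

theorem mem_monoComp_of_walk {ψ : V → C} {c : C} {a b : V} (p : G.Walk a b)
    (hp : ∀ x ∈ p.support, ψ x = c) : b ∈ monoComp G ψ a := by
  induction p with
  | nil => exact Relation.ReflTransGen.refl
  | cons h q ih =>
    simp only [Walk.support_cons, List.mem_cons, forall_eq_or_imp] at hp
    exact Relation.ReflTransGen.head ⟨h, hp.1.trans (hp.2 _ q.start_mem_support).symm⟩ (ih hp.2)

theorem mem_monoComp_of_floodMove_ne {ψ : V → C} {mv : V × C} {v : V}
    (hv : floodMove G ψ mv v ≠ ψ v) : v ∈ monoComp G ψ mv.1 := by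
  by_contra h
  simp [floodMove, h] at hv

theorem monoComp_subset_monoComp_floodMove (ψ : V → C) (v : V) (e : C) :
    monoComp G ψ v ⊆ monoComp G (floodMove G ψ (v, e)) v := by
  intro x hx
  induction hx with
  | refl => exact Relation.ReflTransGen.refl
  | @tail a b ha hab ih =>
    have ha' : a ∈ monoComp G ψ v := ha
    have hb' : b ∈ monoComp G ψ v := ha.tail hab
    exact mem_monoComp_of_adj ih hab.1 (by simp only [floodMove, if_pos ha', if_pos hb'])

theorem mem_monoComp_of_unique_adj {ψ : V → C} {z u v w : V} (hu : u ∈ monoComp G ψ z)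
    (hv : v ∈ monoComp G ψ z) (huv : u ≠ v) (huw : ∀ x, G.Adj u x → x = w) :
    w ∈ monoComp G ψ z := by
  have : Std.Symm (fun a b => G.Adj a b ∧ ψ a = ψ b) := ⟨fun _ _ h => ⟨h.1.symm, h.2.symm⟩⟩
  rcases (Std.Symm.symm _ _ (show Relation.ReflTransGen _ z u from hu)).trans hv |>.cases_head
    with h | ⟨x, hx, -⟩
  · exact absurd h huv
  · exact huw x hx.1 ▸ mem_monoComp_of_adj hu hx.1 hx.2

theorem floodMove_leaf {ψ : V → C} {mv : V × C} {u v w : V} {a : C}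
    (huw : ∀ x, G.Adj u x → x = w) (hw : G.Adj u w) (hvu : v ≠ u) (hv : floodMove G ψ mv v ≠ ψ v)
    (hu : ψ u = a ∨ ψ u = ψ w) :
    floodMove G ψ mv u = a ∨ floodMove G ψ mv u = floodMove G ψ mv w := by
  by_cases huK : u ∈ monoComp G ψ mv.1
  · have hwK := mem_monoComp_of_unique_adj huK (mem_monoComp_of_floodMove_ne hv) hvu.symm huw
    simp [floodMove, huK, hwK]
  · have hwK : ψ u = ψ w → w ∉ monoComp G ψ mv.1 :=
      fun h hwK => huK (mem_monoComp_of_adj hwK hw.symm h.symm)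
    simp only [floodMove, huK, if_false]
    refine hu.imp_right fun h => ?_
    simpa [hwK h] using h

theorem play_leaf (ω : V → C) (S : List (V × C)) {u w : V} (huw : ∀ x, G.Adj u x → x = w)
    (hw : G.Adj u w)
    (hS : ∀ i < S.length, ∃ v ≠ u, play G ω (S.take (i + 1)) v ≠ play G ω (S.take i) v) :
    play G ω S u = ω u ∨ play G ω S u = play G ω S w := by
  suffices ∀ i ≤ S.length, play G ω (S.take i) u = ω u ∨
      play G ω (S.take i) u = play G ω (S.take i) w by
    simpa using this S.length le_rfl
  intro i
  induction i with
  | zero => simp [play]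
  | succ i ih =>
    intro hi
    obtain ⟨v, hvu, hv⟩ := hS i hi
    rw [play_take_succ G ω S hi] at hv ⊢
    exact floodMove_leaf huw hw hvu hv (ih (Nat.le_of_succ_le hi))

theorem exists_floods_map_of_adj_monoComp (ψ : V → C) (v₀ : V) (L : List C)
    (hL : ∀ x, x ∈ monoComp G ψ v₀ ∨ ψ x ∈ L ∧ ∃ y ∈ monoComp G ψ v₀, G.Adj x y) :
    ∃ d, Floods G ψ (L.map (v₀, ·)) d := by
  induction L generalizing ψ with
  | nil =>
    exact ⟨ψ v₀, fun x => apply_eq_of_mem_monoComp ((hL x).resolve_right (by simp))⟩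
  | cons e L ih =>
    -- the move `(v₀, e)` absorbs the neighbours of colour `e`, and the component only grows
    apply ih (floodMove G ψ (v₀, e))
    intro x
    have hsub := monoComp_subset_monoComp_floodMove (G := G) ψ v₀ e
    by_cases hx : x ∈ monoComp G ψ v₀
    · exact .inl (hsub hx)
    obtain ⟨hxL, y, hy, hxy⟩ := (hL x).resolve_left hx
    have hψx : floodMove G ψ (v₀, e) x = ψ x := if_neg hx
    rcases List.mem_cons.mp hxL with hxe | hxL
    · refine .inl (mem_monoComp_of_adj (hsub hy) hxy.symm ?_)
      rw [hψx, hxe]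
      exact if_pos hy
    · exact .inr ⟨hψx ▸ hxL, y, hsub hy, hxy⟩

theorem exists_adj_monoComp_of_leaves (hG : G.Connected) {U : Set V}
    (hU : ∀ u ∈ U, ∃! w, G.Adj u w) {ψ ω : V → C} {c : C} (hψ : ∀ v ∉ U, ψ v = c)
    (hleaf : ∀ u ∈ U, ∀ w, G.Adj u w → ψ u = ω u ∨ ψ u = ψ w) :
    ∃ v₀, ∀ x, x ∈ monoComp G ψ v₀ ∨ ψ x ∈ ω '' U ∧ ∃ y ∈ monoComp G ψ v₀, G.Adj x y := by
  have of_adj : ∀ {v₀ x y}, x ∈ U → G.Adj x y → y ∈ monoComp G ψ v₀ →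
      x ∈ monoComp G ψ v₀ ∨ ψ x ∈ ω '' U ∧ ∃ y ∈ monoComp G ψ v₀, G.Adj x y := by
    intro v₀ x y hx hxy hy
    rcases hleaf x hx y hxy with h | h
    · exact .inr ⟨h ▸ Set.mem_image_of_mem ω hx, y, hy, hxy⟩
    · exact .inl (mem_monoComp_of_adj hy hxy.symm h.symm)
  by_cases hU_ne : ∃ v₀, v₀ ∉ U
  · obtain ⟨v₀, hv₀⟩ := hU_ne
    have hK : ∀ x ∉ U, x ∈ monoComp G ψ v₀ := fun x hx =>
      have ⟨p, hp⟩ := hG.preconnected.exists_isPath v₀ x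
      mem_monoComp_of_walk p fun y hy => hψ y (hp.notMem_of_mem_support hU hv₀ hx y hy)
    refine ⟨v₀, fun x => ?_⟩
    by_cases hx : x ∈ U
    · obtain ⟨w, hxw, -⟩ := hU x hx
      -- a leaf adjacent to a leaf would make `G` a single edge inside `U`
      have hw : w ∉ U := fun hw =>
        have hwx : ∀ y, G.Adj w y → y = x := fun y hy => (hU w hw).unique hy hxw.symm
        (eq_or_eq_of_unique_adj hG (fun y hy => (hU x hx).unique hy hxw) hwx v₀).elim
          (fun h => hv₀ (h ▸ hx)) (fun h => hv₀ (h ▸ hw))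
      exact of_adj hx hxw (hK w hw)
    · exact .inl (hK x hx)
  · push Not at hU_ne
    obtain ⟨a⟩ := hG.nonempty
    obtain ⟨w, haw, -⟩ := hU a (hU_ne a)
    have hwa : ∀ y, G.Adj w y → y = a := fun y hy => (hU w (hU_ne w)).unique hy haw.symm
    refine ⟨a, fun x => ?_⟩
    rcases eq_or_eq_of_unique_adj hG (fun y hy => (hU a (hU_ne a)).unique hy haw) hwa x with
      rfl | rfl
    · exact .inl Relation.ReflTransGen.refl
    · exact of_adj (hU_ne x) haw.symm Relation.ReflTransGen.refl

end FloodIt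

theorem stmt6_general {V C : Type*} [Fintype V] (T : SimpleGraph V) (hT : T.IsTree)
    (ω : V → C)
    (S₀' : List (V × C))
    (hchg : ∀ i < S₀'.length, ∃ v : V, ¬ (∃! w, T.Adj v w) ∧
      play T ω (S₀'.take (i + 1)) v ≠ play T ω (S₀'.take i) v)
    (U : Set V) (hU : ∀ u ∈ U, ∃! w, T.Adj u w)
    (c : C) (hmono : ∀ v ∉ U, play T ω S₀' v = c) :
    ∃ (S : List (V × C)) (d : C), Floods T ω S d ∧
      S.length ≤ S₀'.length + (ω '' U).ncard := by
  have hleaf : ∀ u ∈ U, ∀ w, T.Adj u w →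
      play T ω S₀' u = ω u ∨ play T ω S₀' u = play T ω S₀' w := by
    intro u hu w huw
    refine play_leaf ω S₀' (fun x hx => (hU u hu).unique hx huw) huw fun i hi => ?_
    obtain ⟨v, hv, hne⟩ := hchg i hi
    exact ⟨v, fun hvu => hv (hvu ▸ hU u hu), hne⟩
  obtain ⟨v₀, hv₀⟩ := exists_adj_monoComp_of_leaves hT.connected hU hmono hleaf
  have hfin : (ω '' U).Finite := (Set.toFinite U).image ω
  set L := hfin.toFinset.toList
  obtain ⟨d, hd⟩ := exists_floods_map_of_adj_monoComp _ v₀ L (by simpa [L] using hv₀)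
  refine ⟨S₀' ++ L.map (v₀, ·), d, fun x => by rw [play_append]; exact hd x, ?_⟩
  simp [L, Set.ncard_eq_toFinset_card _ hfin]

/-- let `S₀` flood the tree `T`, let `S₀'` be the subsequence of
`S₀` consisting of moves that change the colour of some non-leaf vertex (in
particular, each move of `S₀'` changes the colour of some non-leaf vertex), and
let `U` be a set of leaves such that playing `S₀'` makes `T \ U` monochromatic.
Then `T` can be flooded by a sequence of length at most `|S₀'| + |col(U, ω)|`. -/
theorem stmt6 {V C : Type*} [Fintype V] (T : SimpleGraph V) (hT : T.IsTree)
    (ω : V → C) (S₀ : List (V × C)) (d₀ : C) (hS₀ : Floods T ω S₀ d₀)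
    (S₀' : List (V × C)) (hsub : S₀'.Sublist S₀)
    (hchg : ∀ i < S₀'.length, ∃ v : V, ¬ (∃! w, T.Adj v w) ∧
      play T ω (S₀'.take (i + 1)) v ≠ play T ω (S₀'.take i) v)
    (U : Set V) (hU : ∀ u ∈ U, ∃! w, T.Adj u w)
    (c : C) (hmono : ∀ v ∉ U, play T ω S₀' v = c) :
    ∃ (S : List (V × C)) (d : C), Floods T ω S d ∧
      S.length ≤ S₀'.length + (ω '' U).ncard :=
  stmt6_general T hT ω S₀' hchg U hU c hmono
end

section
/- Let G be a connected graph with colouring ω, and suppose a sequence S makes G monochromatic in colour d, where the final move of S changes the colour of a monochromatic component X₁ from d′ to d, merging it with monochromatic components X₂, …, X_r all of colour d. For each i, let S_i be the subsequence of the moves of S (excluding the final move) played in X_i. Then playing S_i in the isolated subgraph G[X_i] makes X_i monochromatic: in colour d′ for i = 1, and in colour d for i ≥ 2. In particular m(G[X_1], ω, d′) ≤ |S₁| and m(G[X_i], ω, d) ≤ |S_i| for i ≥ 2. -/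
/-!
A monochromatic component `X` of the colouring reached by `S'` is closed under monochromatic
edges. Flood moves keep monochromatic edges monochromatic, so `X` is closed under the
monochromatic edges of every earlier colouring as well. Hence a move played outside `X` never
recolours a vertex of `X`, while a move played inside `X` recolours the same vertices of `X` in
`G` as in `G[X]`. Playing the moves of `S'` in `X` on `G[X]` therefore reproduces the colours of
`X`, which all equal the colour of `X`.
-/

section FloodIt

variable {V C : Type*} {G : SimpleGraph V} {ω : V → C} {A : Set V}

def IsMonoClosed (G : SimpleGraph V) (ω : V → C) (A : Set V) : Prop :=
  ∀ ⦃a b⦄, a ∈ A → G.Adj a b → ω a = ω b → b ∈ A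

lemma mem_monoComp_comm {u w : V} (h : w ∈ monoComp G ω u) : u ∈ monoComp G ω w := by
  induction h with
  | refl => exact .refl
  | tail _ hbc ih => exact ih.head ⟨hbc.1.symm, hbc.2.symm⟩

lemma colour_eq_of_mem_monoComp {u w : V} (h : w ∈ monoComp G ω u) : ω w = ω u := by
  induction h with
  | refl => rfl
  | tail _ hbc ih => exact hbc.2.symm.trans ih

lemma isMonoClosed_monoComp (ω : V → C) (u : V) : IsMonoClosed G ω (monoComp G ω u) :=
  fun _ _ ha hab hc => ha.tail ⟨hab, hc⟩

lemma IsMonoClosed.monoComp_subset (hA : IsMonoClosed G ω A) {u : V} (hu : u ∈ A) :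
    monoComp G ω u ⊆ A := by
  intro w hw
  induction hw with
  | refl => exact hu
  | tail _ hbc ih => exact hA ih hbc.1 hbc.2

lemma floodMove_eq_of_adj (ω : V → C) (mv : V × C) {a b : V} (hab : G.Adj a b)
    (hc : ω a = ω b) : floodMove G ω mv a = floodMove G ω mv b := by
  have hmem : a ∈ monoComp G ω mv.1 ↔ b ∈ monoComp G ω mv.1 :=
    ⟨fun ha => ha.tail ⟨hab, hc⟩, fun hb => hb.tail ⟨hab.symm, hc.symm⟩⟩
  classical
  simp only [floodMove, hmem, hc]

lemma play_eq_of_adj :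
    ∀ (S : List (V × C)) (ω : V → C) {a b : V}, G.Adj a b → ω a = ω b →
      play G ω S a = play G ω S b
  | [], _, _, _, _, hc => hc
  | mv :: S, ω, _, _, hab, hc => play_eq_of_adj S _ hab (floodMove_eq_of_adj ω mv hab hc)

lemma IsMonoClosed.of_play {S : List (V × C)} (hA : IsMonoClosed G (play G ω S) A) :
    IsMonoClosed G ω A :=
  fun _ _ ha hab hc => hA ha hab (play_eq_of_adj S ω hab hc)

lemma IsMonoClosed.mem_monoComp_induce_iff (hA : IsMonoClosed G ω A) (x y : A) :
    y ∈ monoComp (G.induce A) (fun a => ω a) x ↔ (y : V) ∈ monoComp G ω x := by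
  obtain ⟨y, hy⟩ := y
  refine ⟨fun h => h.lift Subtype.val fun _ _ h => ⟨h.1, h.2⟩,
    fun (h : y ∈ monoComp G ω x) => ?_⟩
  induction h with
  | refl => exact .refl
  | tail hxb hbc ih => exact (ih (hA.monoComp_subset x.2 hxb)).tail ⟨hbc.1, hbc.2⟩

lemma IsMonoClosed.floodMove_induce (hA : IsMonoClosed G ω A) (x : A) (c : C) :
    floodMove (G.induce A) (fun a => ω a) (x, c) = fun a : A => floodMove G ω (x, c) a := by
  classical
  funext y
  simp only [floodMove, hA.mem_monoComp_induce_iff]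

lemma IsMonoClosed.floodMove_of_notMem (hA : IsMonoClosed G ω A) {x : V} (hx : x ∉ A) (c : C) :
    (fun a : A => floodMove G ω (x, c) a) = fun a : A => ω a := by
  funext a
  have ha : (a : V) ∉ monoComp G ω x := fun h =>
    hx (hA.monoComp_subset a.2 (mem_monoComp_comm h))
  simp only [floodMove, ha, if_false]

lemma restrictMoves_cons_of_mem {x : V} (hx : x ∈ A) (c : C) (S : List (V × C)) :
    restrictMoves A ((x, c) :: S) = (⟨x, hx⟩, c) :: restrictMoves A S := by
  simp [restrictMoves, hx]

lemma restrictMoves_cons_of_notMem {x : V} (hx : x ∉ A) (c : C) (S : List (V × C)) :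
    restrictMoves A ((x, c) :: S) = restrictMoves A S := by
  simp [restrictMoves, hx]

theorem IsMonoClosed.play_induce : ∀ {ω : V → C} (S : List (V × C)),
    IsMonoClosed G (play G ω S) A →
      play (G.induce A) (fun a => ω a) (restrictMoves A S) = fun a : A => play G ω S a
  | _, [], _ => rfl
  | ω, (x, c) :: S, hA => by
    have hω : IsMonoClosed G ω A := hA.of_play
    by_cases hx : x ∈ A
    · rw [restrictMoves_cons_of_mem hx, play, hω.floodMove_induce ⟨x, hx⟩ c]
      exact IsMonoClosed.play_induce S hA
    · rw [restrictMoves_cons_of_notMem hx, ← hω.floodMove_of_notMem hx c]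
      exact IsMonoClosed.play_induce S hA

theorem floods_induce_monoComp_play (ω : V → C) (S : List (V × C)) (u : V) :
    Floods (G.induce (monoComp G (play G ω S) u)) (fun a => ω a)
      (restrictMoves (monoComp G (play G ω S) u) S) (play G ω S u) := by
  intro a
  rw [(isMonoClosed_monoComp _ u).play_induce S]
  exact colour_eq_of_mem_monoComp a.2

lemma floodNum_le_length {S : List (V × C)} {d : C} (h : Floods G ω S d) :
    floodNum G ω d ≤ S.length :=
  Nat.sInf_le ⟨S, rfl, h⟩

end FloodIt

theorem stmt14_general {V C : Type*} (G : SimpleGraph V)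
    (ω : V → C) (S' : List (V × C)) (v : V) (d d' : C)
    (hcol : play G ω S' v = d')
    (r : ℕ) (X : Fin (r + 1) → Set V)
    (hX0 : X 0 = monoComp G (play G ω S') v)
    (hXi : ∀ i : Fin (r + 1), i ≠ 0 →
      ∃ u : V, X i = monoComp G (play G ω S') u ∧ play G ω S' u = d ∧
        ∃ a ∈ X 0, ∃ b ∈ X i, G.Adj a b) :
    (Floods (G.induce (X 0)) (fun a => ω a) (restrictMoves (X 0) S') d' ∧
      floodNum (G.induce (X 0)) (fun a => ω a) d' ≤ (restrictMoves (X 0) S').length) ∧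
    ∀ i : Fin (r + 1), i ≠ 0 →
      Floods (G.induce (X i)) (fun a => ω a) (restrictMoves (X i) S') d ∧
      floodNum (G.induce (X i)) (fun a => ω a) d ≤ (restrictMoves (X i) S').length := by
  have hfloods0 : Floods (G.induce (X 0)) (fun a => ω a) (restrictMoves (X 0) S') d' := by
    rw [hX0, ← hcol]
    exact floods_induce_monoComp_play ω S' v
  refine ⟨⟨hfloods0, floodNum_le_length hfloods0⟩, fun i hi => ?_⟩
  obtain ⟨u, hXu, hu, -⟩ := hXi i hi
  have hfloods : Floods (G.induce (X i)) (fun a => ω a) (restrictMoves (X i) S') d := by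
    rw [hXu, ← hu]
    exact floods_induce_monoComp_play ω S' u
  exact ⟨hfloods, floodNum_le_length hfloods⟩

/-- suppose `S' ++ [(v, d)]` floods the connected graph `G` with
colour `d`, where before the final move the monochromatic component `X 0` of
`v` has colour `d' ≠ d` and the final move merges it with monochromatic
components `X 1, …, X r`, each of colour `d` and adjacent to `X 0`.  Then for
each `i`, the subsequence of `S'` played in `X i`, run in the isolated induced
subgraph `G[X i]`, makes `X i` monochromatic — in colour `d'` for `i = 0` and
in colour `d` for `i ≠ 0` — and in particular `m(G[X 0], ω, d') ≤ |S_0|` and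
`m(G[X i], ω, d) ≤ |S_i|` for `i ≠ 0`. -/
theorem stmt14 {V C : Type*} [Fintype V] (G : SimpleGraph V) (hG : G.Connected)
    (ω : V → C) (S' : List (V × C)) (v : V) (d d' : C) (hne : d' ≠ d)
    (hfloods : Floods G ω (S' ++ [(v, d)]) d)
    (hcol : play G ω S' v = d')
    (r : ℕ) (X : Fin (r + 1) → Set V)
    (hX0 : X 0 = monoComp G (play G ω S') v)
    (hXi : ∀ i : Fin (r + 1), i ≠ 0 →
      ∃ u : V, X i = monoComp G (play G ω S') u ∧ play G ω S' u = d ∧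
        ∃ a ∈ X 0, ∃ b ∈ X i, G.Adj a b) :
    (Floods (G.induce (X 0)) (fun a => ω a) (restrictMoves (X 0) S') d' ∧
      floodNum (G.induce (X 0)) (fun a => ω a) d' ≤ (restrictMoves (X 0) S').length) ∧
    ∀ i : Fin (r + 1), i ≠ 0 →
      Floods (G.induce (X i)) (fun a => ω a) (restrictMoves (X i) S') d ∧
      floodNum (G.induce (X i)) (fun a => ω a) d ≤ (restrictMoves (X i) S').length :=
  stmt14_general G ω S' v d d' hcol r X hX0 hXi
end
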